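/- arXiv:2307.14047 — 9 statements merged into one kernel-verified Lean document; each statement's English description precedes it below -/
import Mathlib

section
/- The map E : ℍ → ℍ × Im(ℍ) defined by E(x + Iy) = (exp(x)·cos(y) + I·exp(x)·sin(y), I·y) for I ∈ 𝕊 an imaginary unit and x ∈ ℝ, y ≥ 0, is injective on ℍ. -/
open Quaternion Set

/-- The quaternionic exponential, given by the power series `∑ qᵏ/k!`. -/
noncomputable def qexp (q : ℍ[ℝ]) : ℍ[ℝ] := NormedSpace.exp q

/-- The slice argument `arg_ℐ(q) ∈ (0,π)` of a nonreal quaternion. -/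
noncomputable def sliceArg (q : ℍ[ℝ]) : ℝ := Real.arccos (q.re / ‖q‖)

/-- The imaginary unit `ℐ(q)` of a nonreal quaternion. -/
noncomputable def unitIm (q : ℍ[ℝ]) : ℍ[ℝ] := ‖q.im‖⁻¹ • q.im

/- `Arg(q) = ℐ(q)·arg_ℐ(q)` for nonreal `q`, and `0` on the reals. -/
open scoped Classical in
noncomputable def qArg (q : ℍ[ℝ]) : ℍ[ℝ] :=
  if q.im = 0 then 0 else sliceArg q • unitIm q

/-- The `2k`-th branch of the quaternionic argument:
`Arg_{2k}(q) = ℐ(q)·(arg_ℐ(q) + 2kπ)`. -/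
noncomputable def qArg2k (k : ℤ) (q : ℍ[ℝ]) : ℍ[ℝ] :=
  (sliceArg q + 2 * (k : ℝ) * Real.pi) • unitIm q

/-!
The second component already is the imaginary part `y • I` of `x + y • I`, so only `x` has to be
recovered. Since `I * I = -1` forces `I` to be a purely imaginary unit, `a + b • I` has squared
norm `a ^ 2 + b ^ 2`; hence the first component has squared norm `exp x ^ 2`, which determines `x`.
-/

namespace Quaternion

theorem normSq_eq_one_of_mul_self_eq_neg_one {I : ℍ[ℝ]} (hI : I * I = -1) : normSq I = 1 := by
  have h : normSq I * normSq I = 1 := by rw [← map_mul, hI, normSq_neg, map_one]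
  nlinarith [normSq_nonneg (a := I)]

theorem re_eq_zero_of_mul_self_eq_neg_one {I : ℍ[ℝ]} (hI : I * I = -1) : I.re = 0 := by
  rw [← sq_eq_neg_normSq, sq, hI, normSq_eq_one_of_mul_self_eq_neg_one hI, coe_one]

theorem normSq_coe_add_smul_of_mul_self_eq_neg_one {I : ℍ[ℝ]} (hI : I * I = -1) (a b : ℝ) :
    normSq ((a : ℍ[ℝ]) + b • I) = a ^ 2 + b ^ 2 := by
  have hre := re_eq_zero_of_mul_self_eq_neg_one hI
  have hn := normSq_eq_one_of_mul_self_eq_neg_one hI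
  rw [normSq_def'] at hn ⊢
  simp only [re_add, re_coe, re_smul, imI_add, imI_coe, imI_smul, imJ_add, imJ_coe, imJ_smul,
    imK_add, imK_coe, imK_smul, hre] at hn ⊢
  linear_combination b ^ 2 * hn

theorem normSq_exp_mul_cos_add_exp_mul_sin_smul {I : ℍ[ℝ]} (hI : I * I = -1) (x y : ℝ) :
    normSq (((Real.exp x * Real.cos y : ℝ) : ℍ[ℝ]) + (Real.exp x * Real.sin y) • I) =
      Real.exp x ^ 2 := by
  rw [normSq_coe_add_smul_of_mul_self_eq_neg_one hI]
  linear_combination Real.exp x ^ 2 * Real.sin_sq_add_cos_sq y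

end Quaternion

theorem E_injective_general
    (x₁ x₂ y₁ y₂ : ℝ) (I₁ I₂ : ℍ[ℝ])
    (hI₁ : I₁ * I₁ = -1) (hI₂ : I₂ * I₂ = -1)
    (hE₁ : ((Real.exp x₁ * Real.cos y₁ : ℝ) : ℍ[ℝ]) + (Real.exp x₁ * Real.sin y₁) • I₁ =
           ((Real.exp x₂ * Real.cos y₂ : ℝ) : ℍ[ℝ]) + (Real.exp x₂ * Real.sin y₂) • I₂)
    (hE₂ : y₁ • I₁ = y₂ • I₂) :
    ((x₁ : ℝ) : ℍ[ℝ]) + y₁ • I₁ = ((x₂ : ℝ) : ℍ[ℝ]) + y₂ • I₂ := by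
  have hexp : Real.exp x₁ ^ 2 = Real.exp x₂ ^ 2 := by
    simpa only [normSq_exp_mul_cos_add_exp_mul_sin_smul hI₁,
      normSq_exp_mul_cos_add_exp_mul_sin_smul hI₂] using congrArg normSq hE₁
  have hx : x₁ = x₂ := Real.exp_injective <|
    (pow_left_inj₀ (Real.exp_pos x₁).le (Real.exp_pos x₂).le two_ne_zero).mp hexp
  rw [hx, hE₂]

theorem E_injective
    (x₁ x₂ y₁ y₂ : ℝ) (I₁ I₂ : ℍ[ℝ])
    (hI₁ : I₁ * I₁ = -1) (hI₂ : I₂ * I₂ = -1)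
    (hy₁ : 0 ≤ y₁) (hy₂ : 0 ≤ y₂)
    (hE₁ : ((Real.exp x₁ * Real.cos y₁ : ℝ) : ℍ[ℝ]) + (Real.exp x₁ * Real.sin y₁) • I₁ =
           ((Real.exp x₂ * Real.cos y₂ : ℝ) : ℍ[ℝ]) + (Real.exp x₂ * Real.sin y₂) • I₂)
    (hE₂ : y₁ • I₁ = y₂ • I₂) :
    ((x₁ : ℝ) : ℍ[ℝ]) + y₁ • I₁ = ((x₂ : ℝ) : ℍ[ℝ]) + y₂ • I₂ :=
  E_injective_general x₁ x₂ y₁ y₂ I₁ I₂ hI₁ hI₂ hE₁ hE₂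
end

section
/- The function Arg : ℍ \ (-∞, 0] → Im(ℍ), defined by Arg(q) = ℐ(q)·arg_ℐ(q) for nonreal q and Arg(q) = 0 for q ∈ (0, ∞), is continuous. -/
open Quaternion Set

/-!
Since `unitIm` vanishes on the reals, `qArg = sliceArg • unitIm` everywhere. Off the real axis
both factors are continuous. At a positive real `sliceArg` tends to `arccos 1 = 0` while
`‖unitIm‖ ≤ 1`, so `qArg` tends to `0`.
-/

open Topology

lemma norm_unitIm_le_one (q : ℍ[ℝ]) : ‖unitIm q‖ ≤ 1 := by
  rw [unitIm, norm_smul, norm_inv, norm_norm]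
  exact inv_mul_le_one_of_le₀ le_rfl (norm_nonneg _)

lemma qArg_eq_sliceArg_smul_unitIm (q : ℍ[ℝ]) : qArg q = sliceArg q • unitIm q := by
  by_cases h : q.im = 0 <;> simp [qArg, unitIm, h]

lemma sliceArg_coe {r : ℝ} (hr : 0 < r) : sliceArg (r : ℍ[ℝ]) = 0 := by
  simp [sliceArg, norm_coe, abs_of_pos hr, hr.ne']

lemma sliceArg_nonneg (q : ℍ[ℝ]) : 0 ≤ sliceArg q := Real.arccos_nonneg _

lemma continuousAt_sliceArg {q : ℍ[ℝ]} (hq : q ≠ 0) : ContinuousAt sliceArg q :=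
  Real.continuous_arccos.continuousAt.comp <|
    continuous_re.continuousAt.div continuous_norm.continuousAt (norm_ne_zero_iff.mpr hq)

lemma continuousAt_unitIm {q : ℍ[ℝ]} (hq : q.im ≠ 0) : ContinuousAt unitIm q :=
  ((continuous_norm.comp continuous_im).continuousAt.inv₀ (norm_ne_zero_iff.mpr hq)).smul
    continuous_im.continuousAt

lemma norm_qArg_le_sliceArg (q : ℍ[ℝ]) : ‖qArg q‖ ≤ sliceArg q := by
  rw [qArg_eq_sliceArg_smul_unitIm, norm_smul, Real.norm_of_nonneg (sliceArg_nonneg q)]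
  exact mul_le_of_le_one_right (sliceArg_nonneg q) (norm_unitIm_le_one q)

lemma continuousAt_qArg_of_im_ne_zero {q : ℍ[ℝ]} (hq : q.im ≠ 0) : ContinuousAt qArg q := by
  rw [show qArg = fun q ↦ sliceArg q • unitIm q from funext qArg_eq_sliceArg_smul_unitIm]
  exact (continuousAt_sliceArg (by rintro rfl; exact hq im_zero)).smul (continuousAt_unitIm hq)

lemma continuousAt_qArg_coe {r : ℝ} (hr : 0 < r) : ContinuousAt qArg (r : ℍ[ℝ]) := by
  have hsliceArg : Filter.Tendsto sliceArg (𝓝 (r : ℍ[ℝ])) (𝓝 0) := by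
    have hr0 : (r : ℍ[ℝ]) ≠ 0 := fun h ↦ hr.ne' (congrArg (·.re) h)
    simpa [sliceArg_coe hr] using (continuousAt_sliceArg hr0).tendsto
  simpa [ContinuousAt, qArg] using squeeze_zero_norm norm_qArg_le_sliceArg hsliceArg

theorem qArg_continuousOn :
    ContinuousOn qArg {q : ℍ[ℝ] | ¬ (q.im = 0 ∧ q.re ≤ 0)} := by
  intro q hq
  refine ContinuousAt.continuousWithinAt ?_
  by_cases him : q.im = 0
  · have hre : 0 < q.re := not_le.mp fun h ↦ hq ⟨him, h⟩
    rw [← re_add_im q, him, add_zero]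
    exact continuousAt_qArg_coe hre
  · exact continuousAt_qArg_of_im_ne_zero him
end

section
/- The imaginary unit function ℐ cannot be extended continuously to any real point: for every x₀ ∈ ℝ ⊂ ℍ, there is no continuous function on a neighborhood of x₀ in ℍ extending ℐ restricted to the nonreal quaternions of that neighborhood. -/
open Quaternion Set

/-! On each ray `x₀ + t q` (`t > 0`, `q` nonreal) the function `ℐ` is constantly `ℐ(q)`, so a
continuous extension `g` would have `g x₀ = ℐ(q)` for every nonreal `q`; taking `q` and `-q` gives
`ℐ(q) = -ℐ(q)`, although `ℐ(q) ≠ 0`. -/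

open Filter Topology

lemma unitIm_add_coe (q : ℍ[ℝ]) (r : ℝ) : unitIm (q + r) = unitIm q := by
  simp only [unitIm, Quaternion.im_add, Quaternion.im_coe, add_zero]

lemma unitIm_smul_of_pos {t : ℝ} (ht : 0 < t) (q : ℍ[ℝ]) : unitIm (t • q) = unitIm q := by
  rw [unitIm, unitIm, Quaternion.im_smul, norm_smul, Real.norm_of_nonneg ht.le, smul_smul]
  congr 1
  field_simp

lemma unitIm_neg (q : ℍ[ℝ]) : unitIm (-q) = -unitIm q := by
  simp only [unitIm, Quaternion.im_neg, norm_neg, smul_neg]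

lemma unitIm_ne_zero {q : ℍ[ℝ]} (hq : q.im ≠ 0) : unitIm q ≠ 0 :=
  smul_ne_zero (inv_ne_zero (norm_ne_zero_iff.2 hq)) hq

lemma apply_coe_eq_unitIm_of_continuousAt {U : Set ℍ[ℝ]} {g : ℍ[ℝ] → ℍ[ℝ]} {x : ℝ}
    (hU : U ∈ 𝓝 (x : ℍ[ℝ])) (hg : ContinuousAt g x)
    (hext : ∀ q ∈ U, q.im ≠ 0 → g q = unitIm q) {q : ℍ[ℝ]} (hq : q.im ≠ 0) :
    g x = unitIm q := by
  have hray : Tendsto (fun t : ℝ => (x : ℍ[ℝ]) + t • q) (𝓝[>] 0) (𝓝 x) := by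
    have hcont : Continuous (fun t : ℝ => (x : ℍ[ℝ]) + t • q) := by fun_prop
    simpa using (hcont.tendsto 0).mono_left nhdsWithin_le_nhds
  have hconst : ∀ᶠ t in 𝓝[>] (0 : ℝ), g ((x : ℍ[ℝ]) + t • q) = unitIm q := by
    filter_upwards [hray.eventually_mem hU, self_mem_nhdsWithin] with t hmem (ht : 0 < t)
    have him : ((x : ℍ[ℝ]) + t • q).im = t • q.im := by
      simp only [Quaternion.im_add, Quaternion.im_coe, Quaternion.im_smul, zero_add]
    rw [hext _ hmem (him ▸ smul_ne_zero ht.ne' hq), add_comm, unitIm_add_coe,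
      unitIm_smul_of_pos ht]
  exact tendsto_nhds_unique ((hg.tendsto.comp hray).congr' hconst) tendsto_const_nhds

theorem no_continuous_extension_of_imaginary_unit_function (x₀ : ℝ) :
    ¬ ∃ (U : Set ℍ[ℝ]) (g : ℍ[ℝ] → ℍ[ℝ]), IsOpen U ∧ ((x₀ : ℝ) : ℍ[ℝ]) ∈ U ∧
        ContinuousOn g U ∧ ∀ q ∈ U, q.im ≠ 0 → g q = unitIm q := by
  rintro ⟨U, g, hU, hx₀, hg, hext⟩
  set i : ℍ[ℝ] := ⟨0, 1, 0, 0⟩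
  have hi : i.im ≠ 0 := fun h => one_ne_zero (congrArg QuaternionAlgebra.imI h)
  have hU₀ : U ∈ 𝓝 (x₀ : ℍ[ℝ]) := hU.mem_nhds hx₀
  have hg₀ : ContinuousAt g x₀ := hg.continuousAt hU₀
  have hplus := apply_coe_eq_unitIm_of_continuousAt hU₀ hg₀ hext hi
  have hminus := apply_coe_eq_unitIm_of_continuousAt hU₀ hg₀ hext (q := -i) (by simpa using hi)
  rw [hplus, unitIm_neg, eq_neg_iff_add_eq_zero, ← two_smul ℝ, smul_eq_zero] at hminus
  exact unitIm_ne_zero hi (hminus.resolve_left two_ne_zero)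
end

section
/- The principal branch of the quaternionic logarithm log₀(q) = log|q| + Arg(q) satisfies exp(log₀(q)) = q for all q ∈ ℍ \ (-∞, 0]. -/
open Quaternion Set

/-! Writing `I = ℐ(q)`, the element `log‖q‖ + Arg q` lies in the commutative slice `ℝ + ℝI ≅ ℂ`,
and since `I² = -1` the exponential there is Euler's `exp (a + θI) = eᵃ (cos θ + I sin θ)`. With
`a = log‖q‖` and `θ = arg_ℐ(q) = arccos (Re q / ‖q‖)` this is the polar form
`‖q‖ (cos θ + I sin θ) = Re q + Im q = q`. On the positive reals `Arg` vanishes and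
`exp (log ‖q‖) = ‖q‖ = q`. -/

theorem Real.sin_abs_div_abs_mul (θ : ℝ) : Real.sin |θ| / |θ| * θ = Real.sin θ := by
  rcases eq_or_ne θ 0 with rfl | hθ
  · simp
  rcases abs_choice θ with h | h <;> simp [h, hθ]

namespace Quaternion

open NormedSpace

theorem norm_sq_eq_re_sq_add_norm_im_sq (q : ℍ[ℝ]) : ‖q‖ ^ 2 = q.re ^ 2 + ‖q.im‖ ^ 2 := by
  simp only [sq, ← normSq_eq_norm_mul_self, normSq_def']
  simp only [re_im, imI_im, imJ_im, imK_im]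
  ring

theorem exp_coe_add_smul_of_re_eq_zero_of_norm_eq_one {u : ℍ[ℝ]} (hre : u.re = 0)
    (hnorm : ‖u‖ = 1) (a θ : ℝ) :
    exp ((a : ℍ[ℝ]) + θ • u) = Real.exp a • ((Real.cos θ : ℍ[ℝ]) + Real.sin θ • u) := by
  -- `exp_add_of_commute` is stated for `ℚ`-algebras.
  let +nondep : NormedAlgebra ℚ ℍ := .restrictScalars ℚ ℝ ℍ
  have hcomm : Commute (a : ℍ[ℝ]) (θ • u) := Algebra.commutes a _
  rw [exp_add_of_commute hcomm, exp_coe, ← Real.exp_eq_exp_ℝ, coe_mul_eq_smul,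
    exp_of_re_eq_zero _ (by simp [hre]), norm_smul, hnorm, mul_one, Real.norm_eq_abs,
    Real.cos_abs, smul_smul, Real.sin_abs_div_abs_mul]

end Quaternion

open Quaternion

theorem re_unitIm (q : ℍ[ℝ]) : (unitIm q).re = 0 := by
  simp [unitIm]

theorem norm_unitIm {q : ℍ[ℝ]} (hq : q.im ≠ 0) : ‖unitIm q‖ = 1 := by
  rw [unitIm, norm_smul, norm_inv, norm_norm, inv_mul_cancel₀ (norm_ne_zero_iff.2 hq)]

theorem cos_sliceArg {q : ℍ[ℝ]} (hq : q ≠ 0) : Real.cos (sliceArg q) = q.re / ‖q‖ := by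
  have hre : |q.re| ≤ ‖q‖ :=
    abs_le_of_sq_le_sq (by nlinarith [norm_sq_eq_re_sq_add_norm_im_sq q]) (norm_nonneg q)
  have hratio : |q.re / ‖q‖| ≤ 1 := by
    rwa [abs_div, abs_norm, div_le_one (norm_pos_iff.2 hq)]
  exact Real.cos_arccos (abs_le.1 hratio).1 (abs_le.1 hratio).2

theorem sin_sliceArg {q : ℍ[ℝ]} (hq : q ≠ 0) : Real.sin (sliceArg q) = ‖q.im‖ / ‖q‖ := by
  have hq' : ‖q‖ ≠ 0 := norm_ne_zero_iff.2 hq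
  rw [sliceArg, Real.sin_arccos, ← Real.sqrt_sq (by positivity : 0 ≤ ‖q.im‖ / ‖q‖)]
  congr 1
  field_simp
  linarith [norm_sq_eq_re_sq_add_norm_im_sq q]

theorem norm_smul_cos_sliceArg_add_sin_sliceArg_smul_unitIm {q : ℍ[ℝ]} (hq : q ≠ 0) :
    ‖q‖ • ((Real.cos (sliceArg q) : ℍ[ℝ]) + Real.sin (sliceArg q) • unitIm q) = q := by
  have hq' : ‖q‖ ≠ 0 := norm_ne_zero_iff.2 hq
  rw [cos_sliceArg hq, sin_sliceArg hq, unitIm, smul_add, smul_smul, smul_smul,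
    ← coe_mul_eq_smul, ← coe_mul, mul_div_cancel₀ _ hq', mul_div_cancel₀ _ hq']
  rcases eq_or_ne q.im 0 with him | him
  · simpa [him] using re_add_im q
  · rw [mul_inv_cancel₀ (norm_ne_zero_iff.2 him), one_smul, re_add_im]

theorem exp_principal_log (q : ℍ[ℝ]) (hq : ¬ (q.im = 0 ∧ q.re ≤ 0)) :
    qexp (((Real.log ‖q‖ : ℝ) : ℍ[ℝ]) + qArg q) = q := by
  have hq0 : q ≠ 0 := by
    rintro rfl
    exact hq ⟨rfl, le_rfl⟩
  have hlog : Real.exp (Real.log ‖q‖) = ‖q‖ := Real.exp_log (norm_pos_iff.2 hq0)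
  by_cases him : q.im = 0
  · have hre : 0 < q.re := lt_of_not_ge fun h => hq ⟨him, h⟩
    have hq_re : q = (q.re : ℍ[ℝ]) := by simpa [him] using (re_add_im q).symm
    rw [qArg, if_pos him, add_zero, qexp, exp_coe, ← Real.exp_eq_exp_ℝ, hlog, hq_re, norm_coe,
      Real.norm_of_nonneg hre.le]
  · rw [qArg, if_neg him, qexp,
      exp_coe_add_smul_of_re_eq_zero_of_norm_eq_one (re_unitIm q) (norm_unitIm him), hlog,
      norm_smul_cos_sliceArg_add_sin_sliceArg_smul_unitIm hq0]
end

section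
/- A continuation of the logarithm along a path exists iff a lift to the logarithmic manifold exists: given a path γ : [a,b] → ℍ \ {0}, there exists a continuous path Γ : [a,b] → ℍ × Im(ℍ) with Γ(t) ∈ 𝓔⁺ and pr₁ ∘ Γ = γ if and only if there exists a continuous path γ̃ : [a,b] → ℍ with exp ∘ γ̃ = γ. -/
open Quaternion Set

/-- The map `E(x + Iy) = (exp(x+Iy), Iy)`. -/
noncomputable def Emap (z : ℍ[ℝ]) : ℍ[ℝ] × ℍ[ℝ] := (qexp z, z.im)

/-- The logarithmic manifold `𝓔⁺`, the image of `E`. -/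
def LogManifold : Set (ℍ[ℝ] × ℍ[ℝ]) := Set.range Emap

/-!
Since `‖exp z‖ = e^{Re z}`, the point `E z = (exp z, Im z)` remembers both the real and the
imaginary part of `z`: the map `(p, v) ↦ log ‖p‖ + v` is a left inverse of `E`, continuous on
`𝓔⁺` because `p = exp z ≠ 0` there. Hence `E` is a homeomorphism onto `𝓔⁺`, and composing
with `E` or with this inverse turns continuations of the logarithm into lifts to `𝓔⁺` and back.
-/

lemma norm_qexp (q : ℍ[ℝ]) : ‖qexp q‖ = Real.exp q.re := by
  rw [qexp, Quaternion.norm_exp, ← Real.exp_eq_exp_ℝ, Real.norm_eq_abs,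
    abs_of_pos (Real.exp_pos _)]

lemma continuous_qexp : Continuous qexp :=
  continuous_iff_continuousAt.2 fun q => (NormedSpace.exp_analytic (𝕂 := ℝ) q).continuousAt

lemma continuous_Emap : Continuous Emap :=
  continuous_qexp.prodMk Quaternion.continuous_im

noncomputable def EmapInv (p : ℍ[ℝ] × ℍ[ℝ]) : ℍ[ℝ] := (Real.log ‖p.1‖ : ℍ[ℝ]) + p.2

lemma EmapInv_Emap (z : ℍ[ℝ]) : EmapInv (Emap z) = z := by
  rw [EmapInv, Emap, norm_qexp, Real.log_exp, Quaternion.re_add_im]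

lemma qexp_EmapInv {p : ℍ[ℝ] × ℍ[ℝ]} (hp : p ∈ LogManifold) : qexp (EmapInv p) = p.1 := by
  obtain ⟨z, rfl⟩ := hp
  rw [EmapInv_Emap, Emap]

lemma continuousOn_EmapInv : ContinuousOn EmapInv LogManifold := by
  have hne : ∀ p ∈ LogManifold, ‖p.1‖ ≠ 0 := by
    rintro _ ⟨z, rfl⟩
    exact (norm_qexp z).symm ▸ (Real.exp_pos z.re).ne'
  exact (continuous_coe.comp_continuousOn (continuous_fst.norm.continuousOn.log hne)).add
    continuous_snd.continuousOn

theorem lift_iff_continuation_general (a b : ℝ) (γ : ℝ → ℍ[ℝ]) :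
    (∃ Γ : ℝ → ℍ[ℝ] × ℍ[ℝ], ContinuousOn Γ (Icc a b) ∧
        ∀ t ∈ Icc a b, Γ t ∈ LogManifold ∧ (Γ t).1 = γ t) ↔
      (∃ g : ℝ → ℍ[ℝ], ContinuousOn g (Icc a b) ∧ ∀ t ∈ Icc a b, qexp (g t) = γ t) := by
  constructor
  · rintro ⟨Γ, hΓc, hΓ⟩
    refine ⟨EmapInv ∘ Γ, continuousOn_EmapInv.comp hΓc fun t ht => (hΓ t ht).1,
      fun t ht => ?_⟩
    rw [Function.comp_apply, qexp_EmapInv (hΓ t ht).1, (hΓ t ht).2]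
  · rintro ⟨g, hgc, hg⟩
    exact ⟨Emap ∘ g, continuous_Emap.comp_continuousOn hgc, fun t ht => ⟨⟨g t, rfl⟩, hg t ht⟩⟩

theorem lift_iff_continuation (a b : ℝ) (hab : a ≤ b) (γ : ℝ → ℍ[ℝ])
    (hγ : ContinuousOn γ (Icc a b)) (hne : ∀ t ∈ Icc a b, γ t ≠ 0) :
    (∃ Γ : ℝ → ℍ[ℝ] × ℍ[ℝ], ContinuousOn Γ (Icc a b) ∧
        ∀ t ∈ Icc a b, Γ t ∈ LogManifold ∧ (Γ t).1 = γ t) ↔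
      (∃ g : ℝ → ℍ[ℝ], ContinuousOn g (Icc a b) ∧ ∀ t ∈ Icc a b, qexp (g t) = γ t) :=
  lift_iff_continuation_general a b γ
end

section
/- If γ : [a,b] → ℍ \ {0} is a path with a companion 𝔍 : [a,b] → 𝕊/{±1} and ℐ, -ℐ : [a,b] → 𝕊 are the two continuous lifts of 𝔍, then there exist continuous functions x, y : [a,b] → ℝ such that γ(t) = x(t) + ℐ(t)·y(t) for all t. -/
/-!
On the slice `ℂ_I` the coordinates of `q = x + y I` are recovered as `x = re q` and
`y = -re (q I)`, which depend continuously on `q` and `I`. Since `ℂ_I = ℂ_{-I}`, the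
companion places `γ t` in the slice of the chosen lift `ℐ t` whichever representative it uses.
-/

open Quaternion Set

/-- The sphere `𝕊` of imaginary units of the quaternions. -/
abbrev SphQ : Type := {I : ℍ[ℝ] // I * I = -1}

/-- The identification of antipodal imaginary units. -/
instance sphSetoid : Setoid SphQ where
  r I J := (I : ℍ[ℝ]) = (J : ℍ[ℝ]) ∨ (I : ℍ[ℝ]) = -(J : ℍ[ℝ])
  iseqv := by
    refine ⟨fun I => Or.inl rfl, ?_, ?_⟩
    · rintro I J (h | h)
      · exact Or.inl h.symm
      · exact Or.inr (by rw [h, neg_neg])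
    · rintro I J K (h | h) (h' | h')
      · exact Or.inl (h.trans h')
      · exact Or.inr (by rw [h, h'])
      · exact Or.inr (by rw [h, h'])
      · exact Or.inl (by rw [h, h', neg_neg])

/-- The quotient `𝕊/{±1}` of the sphere of imaginary units by the antipodal map. -/
abbrev PS : Type := Quotient sphSetoid

/-- `q` belongs to the complex slice `ℂ_c = ℝ + ℝJ` determined by `c ∈ 𝕊/{±1}`. -/
def inSlice (q : ℍ[ℝ]) (c : PS) : Prop :=
  ∃ J : SphQ, Quotient.mk sphSetoid J = c ∧ ∃ x y : ℝ, q = (x : ℍ[ℝ]) + y • (J : ℍ[ℝ])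

/-- `𝔍` is a companion of the path `γ` on `[a,b]`. -/
def IsCompanion (γ : ℝ → ℍ[ℝ]) (a b : ℝ) (𝔍 : ℝ → PS) : Prop :=
  ContinuousOn 𝔍 (Set.Icc a b) ∧ ∀ t ∈ Set.Icc a b, inSlice (γ t) (𝔍 t)

lemma Quaternion.re_eq_zero_of_mul_self_eq_neg_one_s11 {I : ℍ[ℝ]} (h : I * I = -1) : I.re = 0 := by
  have hre := congrArg QuaternionAlgebra.re h
  have hi := congrArg QuaternionAlgebra.imI h
  have hj := congrArg QuaternionAlgebra.imJ h
  have hk := congrArg QuaternionAlgebra.imK h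
  simp only [re_mul, imI_mul, imJ_mul, imK_mul, re_neg, imI_neg, imJ_neg, imK_neg, re_one,
    imI_one, imJ_one, imK_one] at hre hi hj hk
  nlinarith [sq_nonneg I.re, sq_nonneg I.imI, sq_nonneg I.imJ, sq_nonneg I.imK]

lemma exists_eq_add_smul_of_inSlice {q : ℍ[ℝ]} {I : SphQ}
    (h : inSlice q (Quotient.mk sphSetoid I)) : ∃ x y : ℝ, q = (x : ℍ[ℝ]) + y • (I : ℍ[ℝ]) := by
  obtain ⟨J, hJ, x, y, rfl⟩ := h
  rcases Quotient.exact hJ with hIJ | hIJ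
  · exact ⟨x, y, by rw [hIJ]⟩
  · exact ⟨x, -y, by rw [hIJ, neg_smul, smul_neg]⟩

lemma eq_re_add_smul_of_eq_add_smul (I : SphQ) {q : ℍ[ℝ]} {x y : ℝ}
    (h : q = (x : ℍ[ℝ]) + y • (I : ℍ[ℝ])) :
    q = (q.re : ℍ[ℝ]) + (-(q * I).re) • (I : ℍ[ℝ]) := by
  have hI : (I : ℍ[ℝ]).re = 0 := re_eq_zero_of_mul_self_eq_neg_one_s11 I.2
  have hx : q.re = x := by simp [h, hI]
  have hy : (q * I).re = -y := by
    rw [h, add_mul, smul_mul_assoc, I.2]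
    simp [hI]
  rw [hx, hy, neg_neg, ← h]

theorem canonical_form_of_path_with_companion_general (a b : ℝ)
    (γ : ℝ → ℍ[ℝ]) (hγ : ContinuousOn γ (Icc a b))
    (𝔍 : ℝ → PS) (h𝔍 : IsCompanion γ a b 𝔍)
    (ℐ : ℝ → SphQ) (hℐ : ContinuousOn ℐ (Icc a b))
    (hlift : ∀ t ∈ Icc a b, Quotient.mk sphSetoid (ℐ t) = 𝔍 t) :
    ∃ x y : ℝ → ℝ, ContinuousOn x (Icc a b) ∧ ContinuousOn y (Icc a b) ∧
      ∀ t ∈ Icc a b, γ t = (x t : ℍ[ℝ]) + y t • ((ℐ t : ℍ[ℝ])) := by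
  refine ⟨fun t => (γ t).re, fun t => -(γ t * ℐ t).re, continuous_re.comp_continuousOn hγ,
    (continuous_re.comp_continuousOn (hγ.mul (continuous_subtype_val.comp_continuousOn hℐ))).neg,
    fun t ht => ?_⟩
  have hslice : inSlice (γ t) (Quotient.mk sphSetoid (ℐ t)) := hlift t ht ▸ h𝔍.2 t ht
  obtain ⟨x, y, hxy⟩ := exists_eq_add_smul_of_inSlice hslice
  exact eq_re_add_smul_of_eq_add_smul (ℐ t) hxy

theorem canonical_form_of_path_with_companion (a b : ℝ) (hab : a ≤ b)
    (γ : ℝ → ℍ[ℝ]) (hγ : ContinuousOn γ (Icc a b)) (hne : ∀ t ∈ Icc a b, γ t ≠ 0)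
    (𝔍 : ℝ → PS) (h𝔍 : IsCompanion γ a b 𝔍)
    (ℐ : ℝ → SphQ) (hℐ : ContinuousOn ℐ (Icc a b))
    (hlift : ∀ t ∈ Icc a b, Quotient.mk sphSetoid (ℐ t) = 𝔍 t) :
    ∃ x y : ℝ → ℝ, ContinuousOn x (Icc a b) ∧ ContinuousOn y (Icc a b) ∧
      ∀ t ∈ Icc a b, γ t = (x t : ℍ[ℝ]) + y t • ((ℐ t : ℍ[ℝ])) :=
  canonical_form_of_path_with_companion_general a b γ hγ 𝔍 h𝔍 ℐ hℐ hlift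
end

section
/- Every path γ : [a,b] → ℍ \ {0} with a companion admits a continuation of the quaternionic logarithm along it: there exists a continuous γ̃ : [a,b] → ℍ with exp ∘ γ̃ = γ. -/
/-!
A companion lifts through the double cover `𝕊 → 𝕊/{±1}` to a continuous choice of imaginary
unit `J t` with `γ t ∈ ℂ_{J t}`. The slice embedding `Complex.lift (J t) : ℂ →ₐ[ℝ] ℍ` commutes
with `exp`, and pulling `γ` back along it gives a continuous nonvanishing complex path, whose
logarithm exists by lifting through the covering map `exp : ℂ → ℂ \ {0}`. Pushing that logarithm
forward along the slice embeddings gives the quaternionic one.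
-/

open Quaternion Set

open scoped RealInnerProductSpace

theorem IsCoveringMapOn.exists_continuous_lift_Icc {E X : Type*} [TopologicalSpace E]
    [TopologicalSpace X] {p : E → X} {s : Set X} (cov : IsCoveringMapOn p s) {a b : ℝ}
    (hab : a ≤ b) {f : ℝ → X} (hf : ContinuousOn f (Icc a b)) (hfs : ∀ t ∈ Icc a b, f t ∈ s)
    (hfa : f a ∈ range p) :
    ∃ F : ℝ → E, Continuous F ∧ ∀ t ∈ Icc a b, p (F t) = f t := by
  have : SimplyConnectedSpace (Icc a b) :=
    have := (convex_Icc a b).contractibleSpace (nonempty_Icc.2 hab); inferInstance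
  have := (convex_Icc a b).locallyPathConnectedSpace
  obtain ⟨e₀, he₀⟩ := hfa
  obtain ⟨F, ⟨-, hF⟩, -⟩ := cov.existsUnique_continuousMap_lifts
    ⟨(Icc a b).domRestrict f, hf.domRestrict⟩ (a₀ := ⟨a, left_mem_Icc.2 hab⟩) he₀
    fun t ↦ hfs t t.2
  refine ⟨IccExtend hab F, F.continuous.Icc_extend', fun t ht ↦ ?_⟩
  rw [IccExtend_of_mem hab F ht]
  exact congrFun hF ⟨t, ht⟩

theorem Complex.exists_continuous_log_Icc {a b : ℝ} (hab : a ≤ b) {f : ℝ → ℂ}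
    (hf : ContinuousOn f (Icc a b)) (hf₀ : ∀ t ∈ Icc a b, f t ≠ 0) :
    ∃ L : ℝ → ℂ, Continuous L ∧ ∀ t ∈ Icc a b, exp (L t) = f t :=
  isCoveringMapOn_exp.exists_continuous_lift_Icc hab hf hf₀
    ⟨log (f a), exp_log (hf₀ a (left_mem_Icc.2 hab))⟩

theorem norm_eq_one_of_mul_self_eq_neg_one {R : Type*} [NormedDivisionRing R] {e : R}
    (he : e * e = -1) : ‖e‖ = 1 := by
  have : ‖e‖ * ‖e‖ = 1 := by rw [← norm_mul, he, norm_neg, norm_one]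
  nlinarith [norm_nonneg e]

theorem Quaternion.re_eq_zero_of_mul_self_eq_neg_one_s12 {e : ℍ[ℝ]} (he : e * e = -1) :
    e.re = 0 := by
  rw [← sq_eq_neg_normSq, sq, he, normSq_eq_norm_mul_self,
    norm_eq_one_of_mul_self_eq_neg_one he, mul_one, coe_one]

instance : MulAction ℤˣ SphQ where
  smul u I := ⟨(u : ℤ) • (I : ℍ[ℝ]), by
    rw [smul_mul_smul_comm, ← Units.val_mul, Int.units_mul_self, Units.val_one, one_smul, I.2]⟩
  one_smul I := Subtype.ext (one_smul ℤ (I : ℍ[ℝ]))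
  mul_smul u v I := Subtype.ext (mul_smul (u : ℤ) (v : ℤ) (I : ℍ[ℝ]))

theorem SphQ.coe_units_smul (u : ℤˣ) (I : SphQ) :
    ((u • I : SphQ) : ℍ[ℝ]) = (u : ℤ) • (I : ℍ[ℝ]) :=
  rfl

theorem isQuotientCoveringMap_quotientMk_sphSetoid :
    IsQuotientCoveringMap (Quotient.mk sphSetoid) ℤˣ where
  toIsQuotientMap := isQuotientMap_quotient_mk'
  continuous_const_smul u := (continuous_subtype_val.const_smul (u : ℤ)).subtype_mk _
  apply_eq_iff_mem_orbit {I J} := by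
    rw [Quotient.eq, MulAction.mem_orbit_iff]
    constructor
    · rintro (h | h)
      · exact ⟨1, (one_smul _ J).trans (Subtype.ext h.symm)⟩
      · exact ⟨-1, Subtype.ext (by simp [SphQ.coe_units_smul, h])⟩
    · rintro ⟨u, rfl⟩
      rcases Int.units_eq_one_or u with rfl | rfl
      · exact Or.inl (by rw [one_smul])
      · exact Or.inr (by simp [SphQ.coe_units_smul])
  disjoint I := by
    refine ⟨Subtype.val ⁻¹' Metric.ball (I : ℍ[ℝ]) 1,
      continuous_subtype_val.continuousAt.preimage_mem_nhds (Metric.ball_mem_nhds _ one_pos),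
      fun u ⟨_, ⟨K, hK, rfl⟩, huK⟩ ↦ ?_⟩
    rcases Int.units_eq_one_or u with rfl | rfl
    · rfl
    simp only [mem_preimage, Metric.mem_ball, dist_eq_norm, SphQ.coe_units_smul, Units.val_neg,
      Units.val_one, neg_smul, one_smul] at hK huK
    -- `K` and `-K` cannot both lie within distance `1` of the unit vector `I`.
    have : ‖(2 : ℝ) • (I : ℍ[ℝ])‖ < 2 := calc
      ‖(2 : ℝ) • (I : ℍ[ℝ])‖ = ‖((I : ℍ[ℝ]) - K) - (-(K : ℍ[ℝ]) - I)‖ := by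
        congr 1; module
      _ ≤ ‖(K : ℍ[ℝ]) - I‖ + ‖-(K : ℍ[ℝ]) - I‖ := by
        rw [norm_sub_rev (K : ℍ[ℝ])]; exact norm_sub_le _ _
      _ < 2 := by linarith
    rw [norm_smul, norm_eq_one_of_mul_self_eq_neg_one I.2] at this
    norm_num at this

theorem exists_continuous_sphQ_lift_Icc {a b : ℝ} (hab : a ≤ b) {𝔍 : ℝ → PS}
    (h𝔍 : ContinuousOn 𝔍 (Icc a b)) :
    ∃ J : ℝ → SphQ, Continuous J ∧ ∀ t ∈ Icc a b, Quotient.mk sphSetoid (J t) = 𝔍 t :=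
  isQuotientCoveringMap_quotientMk_sphSetoid.isCoveringMap.isCoveringMapOn
    |>.exists_continuous_lift_Icc hab h𝔍 (fun _ _ ↦ trivial) (Quotient.mk_surjective _)

theorem qexp_complexLift (J : SphQ) (z : ℂ) :
    qexp (Complex.lift J z) = Complex.lift J (Complex.exp z) := by
  rw [Complex.exp_eq_exp_ℂ]
  exact (NormedSpace.map_exp (Complex.lift J)
    (Complex.lift J).toLinearMap.continuous_of_finiteDimensional z).symm

noncomputable def sliceCoord (J q : ℍ[ℝ]) : ℂ := ⟨q.re, ⟪q, J⟫⟩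

theorem sliceCoord_complexLift (J : SphQ) (z : ℂ) : sliceCoord J (Complex.lift J z) = z := by
  have hre := Quaternion.re_eq_zero_of_mul_self_eq_neg_one_s12 J.2
  have hnorm := norm_eq_one_of_mul_self_eq_neg_one J.2
  apply Complex.ext
  · simp [sliceCoord, hre]
  · simp [sliceCoord, inner_add_left, real_inner_smul_left, Quaternion.inner_def, hre, hnorm]

theorem complexLift_sliceCoord_of_inSlice {q : ℍ[ℝ]} {J : SphQ}
    (hq : inSlice q (Quotient.mk sphSetoid J)) : Complex.lift J (sliceCoord J q) = q := by
  obtain ⟨K, hK, x, y, rfl⟩ := hq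
  obtain ⟨z, hz⟩ : ∃ z : ℂ, Complex.lift J z = (x : ℍ[ℝ]) + y • (K : ℍ[ℝ]) := by
    rcases Quotient.exact hK with h | h
    · exact ⟨⟨x, y⟩, by simp [h]⟩
    · exact ⟨⟨x, -y⟩, by simp [h]⟩
  rw [← hz, sliceCoord_complexLift]

theorem continuation_of_log_exists_of_companion (a b : ℝ) (hab : a ≤ b)
    (γ : ℝ → ℍ[ℝ]) (hγ : ContinuousOn γ (Icc a b)) (hne : ∀ t ∈ Icc a b, γ t ≠ 0)
    (hcomp : ∃ 𝔍 : ℝ → PS, IsCompanion γ a b 𝔍) :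
    ∃ g : ℝ → ℍ[ℝ], ContinuousOn g (Icc a b) ∧ ∀ t ∈ Icc a b, qexp (g t) = γ t := by
  obtain ⟨𝔍, h𝔍, hγ𝔍⟩ := hcomp
  obtain ⟨J, hJ, hJ𝔍⟩ := exists_continuous_sphQ_lift_Icc hab h𝔍
  set f : ℝ → ℂ := fun t ↦ sliceCoord (J t) (γ t)
  have hγf : ∀ t ∈ Icc a b, Complex.lift (J t) (f t) = γ t := fun t ht ↦
    complexLift_sliceCoord_of_inSlice (hJ𝔍 t ht ▸ hγ𝔍 t ht)
  have hf : ContinuousOn f (Icc a b) :=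
    Complex.equivRealProdCLM.symm.continuous.comp_continuousOn
      ((Quaternion.continuous_re.comp_continuousOn hγ).prodMk (hγ.inner (by fun_prop)))
  have hf₀ : ∀ t ∈ Icc a b, f t ≠ 0 := fun t ht h₀ ↦
    hne t ht (by rw [← hγf t ht, h₀, map_zero])
  obtain ⟨L, hL, hLf⟩ := Complex.exists_continuous_log_Icc hab hf hf₀
  refine ⟨fun t ↦ Complex.lift (J t) (L t), ?_, fun t ht ↦ ?_⟩
  · simp only [Complex.lift_apply, Complex.liftAux_apply, algebraMap_def]
    exact ((Quaternion.continuous_coe.comp (Complex.continuous_re.comp hL)).add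
      ((Complex.continuous_im.comp hL).smul (continuous_subtype_val.comp hJ))).continuousOn
  · rw [qexp_complexLift, hLf t ht, hγf t ht]
end

section
/- Every loop in ℍ \ {0} avoiding the real axis is tame and untwisted: if γ : [a,b] → ℍ \ {0} is continuous with γ(a) = γ(b) and γ(t) ∉ ℝ for all t, then γ has a unique companion 𝔍 : [a,b] → 𝕊/{±1}, 𝔍 is a loop, and 𝔍 is null-homotopic in 𝕊/{±1}. -/
open Quaternion Set

/-- The loop `𝔍 : [a,b] → 𝕊/{±1}` is homotopic to a constant in `𝕊/{±1}`. -/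
def NullHomotopicLoop (𝔍 : ℝ → PS) (a b : ℝ) : Prop :=
  ∃ (c : PS) (H : ℝ → ℝ → PS),
    ContinuousOn (fun p : ℝ × ℝ => H p.1 p.2) (Set.Icc a b ×ˢ Set.Icc (0:ℝ) 1) ∧
    (∀ t ∈ Set.Icc a b, H t 0 = 𝔍 t ∧ H t 1 = c) ∧
    (∀ s ∈ Set.Icc (0:ℝ) 1, H a s = H b s)

/-! For nonreal `q` the only slice containing `q` is `ℂ_{ℐ(q)}`, so the companion is forced to be
`t ↦ [ℐ(γ t)]`, which is continuous. It is null-homotopic because `ℍ \ ℝ`, the complement of a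
line in `ℝ⁴`, is simply connected: the loop `γ` is joined by short straight segments to a
piecewise linear loop with vertices `v₀, …, vₙ`; the finitely many proper subspaces
`ℝ + span {vⱼ, vⱼ₊₁}` miss some point `y`, and then the segments from the piecewise linear loop
to `y` miss `ℝ`. Composing this homotopy in `ℍ \ ℝ` with `q ↦ [ℐ(q)]` contracts the companion. -/

section PiecewiseLinear

variable {E : Type*} [AddCommGroup E] [Module ℝ E]

noncomputable def piecewiseLinear (n : ℕ) (v : ℕ → E) (τ : ℝ) : E :=
  ∑ k ∈ Finset.range (n + 1), max 0 (1 - |τ - k|) • v k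

theorem continuous_piecewiseLinear [TopologicalSpace E] [ContinuousAdd E]
    [ContinuousSMul ℝ E] (n : ℕ) (v : ℕ → E) : Continuous (piecewiseLinear n v) := by
  unfold piecewiseLinear
  fun_prop

theorem piecewiseLinear_natCast {n k : ℕ} (hk : k ≤ n) (v : ℕ → E) :
    piecewiseLinear n v k = v k := by
  rw [piecewiseLinear, Finset.sum_eq_single_of_mem k (Finset.mem_range.2 (by omega))]
  · simp
  · intro i _ hik
    have : (1 : ℝ) ≤ |(k : ℝ) - i| := by
      have := Int.one_le_abs (sub_ne_zero.2 (Int.natCast_inj.not.2 hik.symm))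
      exact_mod_cast this
    rw [max_eq_left (by linarith), zero_smul]

theorem piecewiseLinear_of_mem_Icc {n j : ℕ} (hj : j < n) (v : ℕ → E) {τ : ℝ}
    (hτ : τ ∈ Icc (j : ℝ) (j + 1)) :
    piecewiseLinear n v τ = (j + 1 - τ) • v j + (τ - j) • v (j + 1) := by
  have hsub : {j, j + 1} ⊆ Finset.range (n + 1) := by
    intro k hk
    simp only [Finset.mem_insert, Finset.mem_singleton] at hk
    simp only [Finset.mem_range]
    omega
  rw [piecewiseLinear, ← Finset.sum_subset hsub, Finset.sum_pair (by omega)]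
  · rw [abs_of_nonneg (by linarith [hτ.1]), Nat.cast_succ, abs_of_nonpos (by linarith [hτ.2]),
      max_eq_right (by linarith [hτ.2]), max_eq_right (by linarith [hτ.1])]
    congr 2 <;> ring
  · intro k _ hk
    simp only [Finset.mem_insert, Finset.mem_singleton, not_or] at hk
    have : (1 : ℝ) ≤ |τ - k| := by
      rcases Nat.lt_or_gt_of_ne hk.1 with h | h
      · have : (k : ℝ) + 1 ≤ j := by exact_mod_cast h
        exact le_abs.2 (Or.inl (by linarith [hτ.1]))
      · have : (j : ℝ) + 2 ≤ k := by exact_mod_cast (by omega : j + 2 ≤ k)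
        exact le_abs.2 (Or.inr (by linarith [hτ.2]))
    rw [max_eq_left (by linarith), zero_smul]

theorem piecewiseLinear_mem_segment {n j : ℕ} (hj : j < n) (v : ℕ → E) {τ : ℝ}
    (hτ : τ ∈ Icc (j : ℝ) (j + 1)) :
    piecewiseLinear n v τ ∈ segment ℝ (v j) (v (j + 1)) :=
  ⟨j + 1 - τ, τ - j, by linarith [hτ.2], by linarith [hτ.1], by ring,
    (piecewiseLinear_of_mem_Icc hj v hτ).symm⟩

end PiecewiseLinear

theorem exists_nat_lt_mem_Icc {n : ℕ} (hn : 0 < n) {τ : ℝ} (hτ : τ ∈ Icc (0 : ℝ) n) :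
    ∃ j < n, τ ∈ Icc (j : ℝ) (j + 1) := by
  rcases hτ.2.lt_or_eq with hlt | rfl
  · exact ⟨⌊τ⌋₊, (Nat.floor_lt hτ.1).2 hlt, Nat.floor_le hτ.1, (Nat.lt_floor_add_one τ).le⟩
  · exact ⟨n - 1, by omega, by push_cast [Nat.cast_sub hn]; constructor <;> linarith⟩

section Approximation

theorem grid_mem_Icc {a b : ℝ} (hab : a ≤ b) {n k : ℕ} (hk : k ≤ n) :
    a + k * (b - a) / n ∈ Icc a b := by
  have hle : k * (b - a) / n ≤ b - a :=
    div_le_of_le_mul₀ n.cast_nonneg (sub_nonneg.2 hab) (by rw [mul_comm]; gcongr)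
  exact ⟨le_add_of_nonneg_right (by positivity [sub_nonneg.2 hab]), by linarith⟩

-- Also valid for `a = b`, where `n * (t - a) / (b - a) = 0` by `x / 0 = 0`.
theorem abs_sub_grid_le {a b t : ℝ} (ht : t ∈ Icc a b) {n k : ℕ} (hn : 0 < n)
    (hk : |n * (t - a) / (b - a) - k| ≤ 1) : |t - (a + k * (b - a) / n)| ≤ (b - a) / n := by
  have hab : 0 ≤ b - a := sub_nonneg.2 (ht.1.trans ht.2)
  have hsub : t - (a + k * (b - a) / n) = (n * (t - a) / (b - a) - k) * (b - a) / n := by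
    rcases eq_or_ne a b with rfl | hne
    · simp [le_antisymm ht.2 ht.1]
    · field_simp [sub_ne_zero.2 hne.symm]; ring
  rw [hsub, abs_div, abs_mul, abs_of_nonneg hab, Nat.abs_cast]
  gcongr
  nlinarith

variable {E : Type*} [NormedAddCommGroup E] [NormedSpace ℝ E] {a b : ℝ}

theorem exists_piecewiseLinear_approx {u : ℝ → E} (hu : ContinuousOn u (Icc a b)) {ε : ℝ}
    (hε : 0 < ε) :
    ∃ (n : ℕ) (v : ℕ → E) (P : ℝ → E), Continuous P ∧ P a = u a ∧ P b = u b ∧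
      ∀ t ∈ Icc a b, dist (P t) (u t) < ε ∧ ∃ j < n, P t ∈ segment ℝ (v j) (v (j + 1)) := by
  obtain ⟨δ, hδ, hu_unif⟩ := Metric.uniformContinuousOn_iff.1
    (isCompact_Icc.uniformContinuousOn_of_continuous hu) ε hε
  obtain ⟨m, hm⟩ := exists_nat_gt ((b - a) / δ)
  set n := m + 1
  have hn : (0 : ℝ) < n := by positivity
  have hmesh : (b - a) / n < δ := by
    rw [div_lt_iff₀ hn]; rw [div_lt_iff₀ hδ] at hm; push_cast [n]; linarith
  set node : ℕ → ℝ := fun k => a + k * (b - a) / n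
  set τ : ℝ → ℝ := fun t => n * (t - a) / (b - a)
  set P := fun t => piecewiseLinear n (u ∘ node) (τ t)
  have hPa : P a = u a := by
    simpa [P, τ, node] using piecewiseLinear_natCast (Nat.zero_le n) (u ∘ node)
  have hPb : P b = u b := by
    rcases eq_or_ne a b with rfl | hab
    · exact hPa
    · have hτb : τ b = n := by simp only [τ]; field_simp [sub_ne_zero.2 hab.symm]
      simp only [P, hτb, piecewiseLinear_natCast le_rfl, Function.comp, node]
      congr 1; field_simp; ring
  refine ⟨n, u ∘ node, P, (continuous_piecewiseLinear n _).comp (by fun_prop), hPa, hPb,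
    fun t ht => ?_⟩
  have hab : a ≤ b := ht.1.trans ht.2
  have hnear : ∀ k ≤ n, |τ t - k| ≤ 1 → u (node k) ∈ Metric.ball (u t) ε := fun k hk hτk =>
    hu_unif _ (grid_mem_Icc hab hk) t ht <| by
      rw [dist_comm, Real.dist_eq]
      exact (abs_sub_grid_le ht (by omega) hτk).trans_lt hmesh
  have hτ : τ t ∈ Icc (0 : ℝ) n :=
    ⟨div_nonneg (mul_nonneg hn.le (sub_nonneg.2 ht.1)) (sub_nonneg.2 hab),
      div_le_of_le_mul₀ (sub_nonneg.2 hab) hn.le (by gcongr; exact ht.2)⟩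
  obtain ⟨j, hjn, hj⟩ := exists_nat_lt_mem_Icc (by omega) hτ
  have hseg := piecewiseLinear_mem_segment hjn (u ∘ node) hj
  refine ⟨(convex_ball (u t) ε).segment_subset ?_ ?_ hseg, j, hjn, hseg⟩
  · exact hnear j hjn.le (by rw [abs_le]; constructor <;> linarith [hj.1, hj.2])
  · exact hnear (j + 1) hjn (by push_cast; rw [abs_le]; constructor <;> linarith [hj.1, hj.2])

end Approximation

section LoopHomotopy

variable {X : Type*} [TopologicalSpace X] {a b : ℝ}

def LoopHomotopic (S : Set X) (a b : ℝ) (u w : ℝ → X) : Prop :=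
  ∃ G : ℝ → ℝ → X,
    ContinuousOn (fun p : ℝ × ℝ => G p.1 p.2) (Icc a b ×ˢ Icc 0 1) ∧
    MapsTo (fun p : ℝ × ℝ => G p.1 p.2) (Icc a b ×ˢ Icc 0 1) S ∧
    (∀ t ∈ Icc a b, G t 0 = u t ∧ G t 1 = w t) ∧ ∀ s ∈ Icc (0 : ℝ) 1, G a s = G b s

theorem LoopHomotopic.trans {S : Set X} {u v w : ℝ → X} (h₁ : LoopHomotopic S a b u v)
    (h₂ : LoopHomotopic S a b v w) : LoopHomotopic S a b u w := by
  obtain ⟨G₁, hc₁, hS₁, he₁, hl₁⟩ := h₁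
  obtain ⟨G₂, hc₂, hS₂, he₂, hl₂⟩ := h₂
  classical
  refine ⟨fun t s => if s ≤ 1 / 2 then G₁ t (2 * s) else G₂ t (2 * s - 1), ?_, ?_, ?_, ?_⟩
  · apply ContinuousOn.if
    · rintro ⟨t, s⟩ ⟨⟨ht, -⟩, hfr⟩
      have hs : s = 1 / 2 := frontier_le_subset_eq continuous_snd continuous_const hfr
      simp only [hs]
      norm_num [(he₁ t ht).2, (he₂ t ht).1]
    · refine hc₁.comp (f := fun p : ℝ × ℝ => (p.1, 2 * p.2)) (by fun_prop) ?_
      rintro ⟨t, s⟩ ⟨⟨ht, hs⟩, hs'⟩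
      rw [(isClosed_le continuous_snd continuous_const).closure_eq] at hs'
      exact ⟨ht, by constructor <;> linarith [hs.1, show s ≤ 1 / 2 from hs']⟩
    · refine hc₂.comp (f := fun p : ℝ × ℝ => (p.1, 2 * p.2 - 1)) (by fun_prop) ?_
      rintro ⟨t, s⟩ ⟨⟨ht, hs⟩, hs'⟩
      have hs'' : 1 / 2 ≤ s :=
        closure_lt_subset_le continuous_const continuous_snd (by simpa only [not_le] using hs')
      exact ⟨ht, by constructor <;> linarith [hs.2]⟩
  · rintro ⟨t, s⟩ ⟨ht, hs⟩
    dsimp only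
    split_ifs with h
    · exact hS₁ (x := (t, 2 * s)) ⟨ht, by constructor <;> linarith [hs.1]⟩
    · exact hS₂ (x := (t, 2 * s - 1)) ⟨ht, by constructor <;> linarith [hs.2]⟩
  · intro t ht
    norm_num [(he₁ t ht).1, (he₂ t ht).2]
  · intro s hs
    dsimp only
    split_ifs with h
    · exact hl₁ _ ⟨by linarith [hs.1], by linarith⟩
    · exact hl₂ _ ⟨by linarith, by linarith [hs.2]⟩

theorem LoopHomotopic.nullHomotopicLoop_comp {S : Set X} {u : ℝ → X} {y : X} {f : X → PS}
    (hf : ContinuousOn f S) (h : LoopHomotopic S a b u fun _ => y) :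
    NullHomotopicLoop (f ∘ u) a b := by
  obtain ⟨G, hc, hS, he, hl⟩ := h
  exact ⟨f y, fun t s => f (G t s), hf.comp hc hS, fun t ht => by simp [he t ht],
    fun s hs => congrArg f (hl s hs)⟩

theorem loopHomotopic_of_segment_subset {E : Type*} [AddCommGroup E] [Module ℝ E]
    [TopologicalSpace E] [IsTopologicalAddGroup E] [ContinuousSMul ℝ E] {S : Set E}
    {u w : ℝ → E} (hu : ContinuousOn u (Icc a b)) (hw : ContinuousOn w (Icc a b))
    (hu_loop : u a = u b) (hw_loop : w a = w b)
    (hS : ∀ t ∈ Icc a b, segment ℝ (u t) (w t) ⊆ S) : LoopHomotopic S a b u w :=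
  ⟨fun t s => AffineMap.lineMap (u t) (w t) s,
    (hu.comp continuousOn_fst fun _ hp => hp.1).lineMap (hw.comp continuousOn_fst fun _ hp => hp.1)
      continuousOn_snd,
    fun p hp => hS p.1 hp.1 (segment_eq_image_lineMap ℝ (u p.1) (w p.1) ▸ mem_image_of_mem _ hp.2),
    fun t _ => by simp, fun s _ => by simp [hu_loop, hw_loop]⟩

end LoopHomotopy

section Avoidance

open Module Submodule

variable {E : Type*}

theorem segment_subset_compl_of_notMem [AddCommGroup E] [Module ℝ E] {L W : Submodule ℝ E}
    (hLW : L ≤ W) {x y : E} (hx : x ∈ W) (hxL : x ∉ L) (hy : y ∉ W) :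
    segment ℝ x y ⊆ (L : Set E)ᶜ := by
  rintro _ ⟨α, β, -, -, hαβ, rfl⟩ hz
  rcases eq_or_ne β 0 with rfl | hβ
  · rw [add_zero] at hαβ
    simp only [hαβ, one_smul, zero_smul, add_zero, SetLike.mem_coe] at hz
    exact hxL hz
  · have hy' : y = β⁻¹ • ((α • x + β • y) - α • x) := by
      rw [add_sub_cancel_left, smul_smul, inv_mul_cancel₀ hβ, one_smul]
    exact hy (hy' ▸ W.smul_mem _ (W.sub_mem (hLW hz) (W.smul_mem _ hx)))

theorem exists_forall_notMem_sup_span_pair [AddCommGroup E] [Module ℝ E] [FiniteDimensional ℝ E]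
    {L : Submodule ℝ E} (hL : finrank ℝ L + 3 ≤ finrank ℝ E) {ι : Type*} [Finite ι]
    (v w : ι → E) : ∃ y, ∀ i, y ∉ L ⊔ span ℝ {v i, w i} := by
  by_contra! h
  obtain ⟨i, hi⟩ := Subspace.exists_eq_top_of_iUnion_eq_univ
    (eq_univ_of_forall fun y => mem_iUnion.2 (h y))
  have hsup := finrank_add_le_finrank_add_finrank L (span ℝ {v i, w i})
  have hpair : finrank ℝ (span ℝ {v i, w i}) ≤ 2 := by
    classical
    have := finrank_span_finset_le_card (R := ℝ) ({v i, w i} : Finset E)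
    rw [Set.finrank, Finset.coe_pair] at this
    exact this.trans Finset.card_le_two
  rw [hi, finrank_top] at hsup
  omega

variable [NormedAddCommGroup E] [NormedSpace ℝ E] [FiniteDimensional ℝ E] {a b : ℝ}

theorem exists_loopHomotopic_const_of_finrank_add_three_le {L : Submodule ℝ E}
    (hL : finrank ℝ L + 3 ≤ finrank ℝ E) {γ : ℝ → E} (hγ : ContinuousOn γ (Icc a b))
    (hloop : γ a = γ b) (hγL : ∀ t ∈ Icc a b, γ t ∉ L) :
    ∃ y, LoopHomotopic (L : Set E)ᶜ a b γ fun _ => y := by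
  obtain ⟨δ, hδ, hthick⟩ := (isCompact_Icc.image_of_continuousOn hγ).exists_thickening_subset_open
    L.closed_of_finiteDimensional.isOpen_compl (by rintro _ ⟨t, ht, rfl⟩; exact hγL t ht)
  have hball : ∀ t ∈ Icc a b, Metric.ball (γ t) δ ⊆ (L : Set E)ᶜ := fun t ht =>
    (Metric.ball_subset_thickening (mem_image_of_mem γ ht) δ).trans hthick
  obtain ⟨n, v, P, hP, hPa, hPb, hPγ⟩ := exists_piecewiseLinear_approx hγ hδ
  obtain ⟨y, hy⟩ := exists_forall_notMem_sup_span_pair hL (fun j : Fin n => v j)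
    (fun j => v (j + 1))
  have hγP : LoopHomotopic (L : Set E)ᶜ a b γ P := by
    refine loopHomotopic_of_segment_subset hγ hP.continuousOn hloop (by rw [hPa, hPb, hloop])
      fun t ht => ((convex_ball (γ t) δ).segment_subset (Metric.mem_ball_self hδ) ?_).trans
        (hball t ht)
    rw [Metric.mem_ball]
    exact (hPγ t ht).1
  have hPy : LoopHomotopic (L : Set E)ᶜ a b P fun _ => y := by
    refine loopHomotopic_of_segment_subset hP.continuousOn continuousOn_const
      (by rw [hPa, hPb, hloop]) rfl fun t ht => ?_
    obtain ⟨hPt, j, hj, hseg⟩ := hPγ t ht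
    refine segment_subset_compl_of_notMem le_sup_left ?_ (hball t ht hPt) (hy ⟨j, hj⟩)
    exact (Submodule.convex _).segment_subset (mem_sup_right (subset_span (by simp)))
      (mem_sup_right (subset_span (by simp))) hseg
  exact ⟨y, hγP.trans hPy⟩

end Avoidance

section Slices

open Module Submodule

theorem Quaternion.mul_self_eq_neg_one_iff {q : ℍ[ℝ]} : q * q = -1 ↔ q.re = 0 ∧ ‖q‖ = 1 := by
  constructor
  · intro h
    have hnorm : ‖q‖ = 1 := by
      have : ‖q‖ * ‖q‖ = 1 := by rw [← norm_mul, h, norm_neg, norm_one]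
      nlinarith [norm_nonneg q]
    have hq : q ≠ 0 := by rintro rfl; simp at hnorm
    refine ⟨star_eq_neg.1 (mul_right_cancel₀ hq ?_), hnorm⟩
    rw [star_mul_self, normSq_eq_norm_mul_self, hnorm, neg_mul, h, neg_neg, mul_one, coe_one]
  · rintro ⟨hre, hnorm⟩
    rw [← sq, sq_eq_neg_normSq.2 hre, normSq_eq_norm_mul_self, hnorm, mul_one, coe_one]

theorem Quaternion.mem_span_one_iff_im_eq_zero {q : ℍ[ℝ]} : q ∈ span ℝ {1} ↔ q.im = 0 := by
  rw [mem_span_singleton]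
  constructor
  · rintro ⟨r, rfl⟩
    simp
  · intro h
    refine ⟨q.re, ?_⟩
    rw [← coe_one, ← coe_smul, smul_eq_mul, mul_one]
    conv_rhs => rw [← re_add_im q, h, add_zero]

theorem unitIm_mul_self {q : ℍ[ℝ]} (hq : q.im ≠ 0) : unitIm q * unitIm q = -1 :=
  mul_self_eq_neg_one_iff.2 ⟨by simp [unitIm], by
    rw [unitIm, norm_smul, norm_inv, norm_norm, inv_mul_cancel₀ (norm_ne_zero_iff.2 hq)]⟩

instance : Nonempty PS :=
  ⟨⟦⟨_, unitIm_mul_self (q := ⟨0, 1, 0, 0⟩) (ne_of_apply_ne QuaternionAlgebra.imI one_ne_zero)⟩⟧⟩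

-- The class of `ℐ(q)`, i.e. of the slice through `q`; a junk value when `q` is real.
open scoped Classical in
noncomputable def sliceClass (q : ℍ[ℝ]) : PS :=
  if h : unitIm q * unitIm q = -1 then ⟦⟨unitIm q, h⟩⟧ else Classical.arbitrary PS

theorem sliceClass_eq {q : ℍ[ℝ]} (hq : q.im ≠ 0) :
    sliceClass q = ⟦⟨unitIm q, unitIm_mul_self hq⟩⟧ :=
  dif_pos _

theorem continuousOn_sliceClass : ContinuousOn sliceClass {q : ℍ[ℝ] | q.im ≠ 0} := by
  have hunit : ContinuousOn unitIm {q : ℍ[ℝ] | q.im ≠ 0} :=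
    (continuous_im.norm.continuousOn.inv₀ fun _ hq => norm_ne_zero_iff.2 hq).smul
      continuous_im.continuousOn
  rw [continuousOn_iff_continuous_domRestrict] at hunit ⊢
  have : domRestrict {q : ℍ[ℝ] | q.im ≠ 0} sliceClass =
      fun q => ⟦⟨unitIm q, unitIm_mul_self q.2⟩⟧ := funext fun q => sliceClass_eq q.2
  rw [this]
  exact continuous_quotient_mk'.comp (hunit.subtype_mk _)

theorem inSlice_sliceClass {q : ℍ[ℝ]} (hq : q.im ≠ 0) : inSlice q (sliceClass q) := by
  refine ⟨⟨unitIm q, unitIm_mul_self hq⟩, (sliceClass_eq hq).symm, q.re, ‖q.im‖, ?_⟩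
  change q = q.re + ‖q.im‖ • unitIm q
  rw [unitIm, smul_smul, mul_inv_cancel₀ (norm_ne_zero_iff.2 hq), one_smul, re_add_im]

theorem eq_sliceClass_of_inSlice {q : ℍ[ℝ]} {c : PS} (hq : q.im ≠ 0) (h : inSlice q c) :
    c = sliceClass q := by
  obtain ⟨J, rfl, x, y, rfl⟩ := h
  obtain ⟨hJre, hJnorm⟩ := mul_self_eq_neg_one_iff.1 J.2
  have him : ((x : ℍ[ℝ]) + y • (J : ℍ[ℝ])).im = y • (J : ℍ[ℝ]) := by
    rw [im_add, im_coe, zero_add, im_smul, ← re_add_im (J : ℍ[ℝ]), hJre, Quaternion.coe_zero,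
      zero_add, im_idem]
  have hy : y ≠ 0 := by rintro rfl; simp at hq
  have hunit : unitIm ((x : ℍ[ℝ]) + y • (J : ℍ[ℝ])) = (|y|⁻¹ * y) • (J : ℍ[ℝ]) := by
    rw [unitIm, him, norm_smul, hJnorm, mul_one, Real.norm_eq_abs, smul_smul]
  rw [sliceClass_eq hq]
  apply Quotient.sound
  rcases hy.lt_or_gt with hneg | hpos
  · right
    change (J : ℍ[ℝ]) = -unitIm _
    rw [hunit, abs_of_neg hneg, inv_neg, neg_mul, inv_mul_cancel₀ hy, neg_smul, one_smul, neg_neg]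
  · left
    change (J : ℍ[ℝ]) = unitIm _
    rw [hunit, abs_of_pos hpos, inv_mul_cancel₀ hy, one_smul]

theorem isCompanion_sliceClass_comp {γ : ℝ → ℍ[ℝ]} {a b : ℝ} (hγ : ContinuousOn γ (Icc a b))
    (hreal : ∀ t ∈ Icc a b, (γ t).im ≠ 0) : IsCompanion γ a b (sliceClass ∘ γ) :=
  ⟨continuousOn_sliceClass.comp hγ hreal, fun t ht => inSlice_sliceClass (hreal t ht)⟩

end Slices

theorem loop_avoiding_reals_is_tame_untwisted_general (a b : ℝ)
    (γ : ℝ → ℍ[ℝ]) (hγ : ContinuousOn γ (Icc a b))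
    (hloop : γ a = γ b) (hreal : ∀ t ∈ Icc a b, (γ t).im ≠ 0) :
    ∃ 𝔍 : ℝ → PS, IsCompanion γ a b 𝔍 ∧
      (∀ 𝔍' : ℝ → PS, IsCompanion γ a b 𝔍' → ∀ t ∈ Icc a b, 𝔍' t = 𝔍 t) ∧
      𝔍 a = 𝔍 b ∧ NullHomotopicLoop 𝔍 a b := by
  have hdim : Module.finrank ℝ (Submodule.span ℝ {(1 : ℍ[ℝ])}) + 3 ≤ Module.finrank ℝ ℍ[ℝ] := by
    rw [finrank_span_singleton one_ne_zero, Quaternion.finrank_eq_four]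
  obtain ⟨y, hy⟩ := exists_loopHomotopic_const_of_finrank_add_three_le hdim hγ hloop
    fun t ht => mt mem_span_one_iff_im_eq_zero.1 (hreal t ht)
  refine ⟨sliceClass ∘ γ, isCompanion_sliceClass_comp hγ hreal,
    fun 𝔍' h𝔍' t ht => eq_sliceClass_of_inSlice (hreal t ht) (h𝔍'.2 t ht),
    congrArg sliceClass hloop, hy.nullHomotopicLoop_comp ?_⟩
  exact continuousOn_sliceClass.mono fun q hq => mt mem_span_one_iff_im_eq_zero.2 hq

theorem loop_avoiding_reals_is_tame_untwisted (a b : ℝ) (hab : a ≤ b)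
    (γ : ℝ → ℍ[ℝ]) (hγ : ContinuousOn γ (Icc a b)) (hne : ∀ t ∈ Icc a b, γ t ≠ 0)
    (hloop : γ a = γ b) (hreal : ∀ t ∈ Icc a b, (γ t).im ≠ 0) :
    ∃ 𝔍 : ℝ → PS, IsCompanion γ a b 𝔍 ∧
      (∀ 𝔍' : ℝ → PS, IsCompanion γ a b 𝔍' → ∀ t ∈ Icc a b, 𝔍' t = 𝔍 t) ∧
      𝔍 a = 𝔍 b ∧ NullHomotopicLoop 𝔍 a b :=
  loop_avoiding_reals_is_tame_untwisted_general a b γ hγ hloop hreal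
end

section
/- A loop with companion (γ, 𝔍), where γ takes a nonreal value at its endpoints, is twisted if and only if each shadow has conjugate endpoints: γ_ℐ(a) = conj(γ_ℐ(b)). -/
open Quaternion Set

/- At the endpoints of the loop, `x(a) + y(a) ℐ(a) = x(b) + y(b) ℐ(b)`. Since imaginary units are
purely imaginary, comparing real parts gives `x(a) = x(b)` and `y(a) ℐ(a) = y(b) ℐ(b)`, where
`y(a) ≠ 0` because `γ(a)` is nonreal. Hence `ℐ(a) = -ℐ(b)` exactly when `y(a) = -y(b)`, i.e. when
the shadow endpoints `x(a) + i y(a)` and `x(b) + i y(b)` are conjugate. -/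

theorem ne_zero_of_mul_self_eq_neg_one {R : Type*} [NonAssocRing R] [Nontrivial R] {q : R}
    (h : q * q = -1) : q ≠ 0 := by
  rintro rfl
  simp at h

namespace Quaternion

theorem re_eq_zero_of_mul_self_eq_neg_one_s16 {q : ℍ[ℝ]} (h : q * q = -1) : q.re = 0 := by
  have hnorm : normSq q = 1 := by
    have hsq : normSq q * normSq q = 1 := by
      rw [← map_mul, h, normSq_neg, map_one]
    nlinarith [normSq_nonneg (a := q)]
  rw [← sq_eq_neg_normSq, hnorm, sq, h, coe_one]

theorem coe_add_smul_eq_coe_add_smul_iff {x₁ x₂ y₁ y₂ : ℝ} {I J : ℍ[ℝ]}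
    (hI : I.re = 0) (hJ : J.re = 0) :
    (x₁ : ℍ[ℝ]) + y₁ • I = x₂ + y₂ • J ↔ x₁ = x₂ ∧ y₁ • I = y₂ • J := by
  constructor
  · intro h
    have hre : x₁ = x₂ := by simpa [hI, hJ] using congrArg QuaternionAlgebra.re h
    exact ⟨hre, by rw [hre] at h; exact add_left_cancel h⟩
  · rintro ⟨rfl, h⟩
    rw [h]

end Quaternion

theorem eq_neg_iff_of_smul_eq_smul {K V : Type*} [Field K] [AddCommGroup V] [Module K V]
    {y₁ y₂ : K} {v w : V} (h : y₁ • v = y₂ • w) (hy : y₁ ≠ 0) (hw : w ≠ 0) :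
    v = -w ↔ y₁ = -y₂ := by
  calc v = -w ↔ y₁ • v = y₁ • -w := (smul_right_injective V hy).eq_iff.symm
    _ ↔ y₂ • w = (-y₁) • w := by rw [h, smul_neg, neg_smul]
    _ ↔ y₂ = -y₁ := (smul_left_injective K hw).eq_iff
    _ ↔ y₁ = -y₂ := by rw [eq_neg_iff_add_eq_zero, eq_neg_iff_add_eq_zero, add_comm]

theorem Complex.ofReal_add_mul_I_eq_conj_iff (x₁ y₁ x₂ y₂ : ℝ) :
    (x₁ : ℂ) + y₁ * I = (starRingEnd ℂ) ((x₂ : ℂ) + y₂ * I) ↔ x₁ = x₂ ∧ y₁ = -y₂ := by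
  simp [Complex.ext_iff]

theorem twisted_iff_shadow_conjugate_endpoints_general (a b : ℝ) (hab : a ≤ b)
    (γ : ℝ → ℍ[ℝ]) (ℐ : ℝ → SphQ) (x y : ℝ → ℝ)
    (hcan : ∀ t ∈ Icc a b, γ t = (x t : ℍ[ℝ]) + y t • (ℐ t : ℍ[ℝ]))
    (hloop : γ a = γ b)
    (hnonreal : (γ a).im ≠ 0) :
    (ℐ a : ℍ[ℝ]) = -(ℐ b : ℍ[ℝ]) ↔
      (x a : ℂ) + (y a : ℂ) * Complex.I =
        (starRingEnd ℂ) ((x b : ℂ) + (y b : ℂ) * Complex.I) := by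
  have ha : a ∈ Icc a b := ⟨le_rfl, hab⟩
  have hb : b ∈ Icc a b := ⟨hab, le_rfl⟩
  obtain ⟨hx, hsmul⟩ := (coe_add_smul_eq_coe_add_smul_iff
    (re_eq_zero_of_mul_self_eq_neg_one_s16 (ℐ a).2) (re_eq_zero_of_mul_self_eq_neg_one_s16 (ℐ b).2)).mp
    (by rw [← hcan a ha, ← hcan b hb, hloop])
  have hya : y a ≠ 0 := by
    intro hy
    apply hnonreal
    rw [hcan a ha, hy, zero_smul, add_zero, im_coe]
  rw [eq_neg_iff_of_smul_eq_smul hsmul hya (ne_zero_of_mul_self_eq_neg_one (ℐ b).2),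
    Complex.ofReal_add_mul_I_eq_conj_iff]
  exact (and_iff_right hx).symm

theorem twisted_iff_shadow_conjugate_endpoints (a b : ℝ) (hab : a ≤ b)
    (γ : ℝ → ℍ[ℝ]) (ℐ : ℝ → SphQ) (x y : ℝ → ℝ)
    (hγ : ContinuousOn γ (Icc a b)) (hne : ∀ t ∈ Icc a b, γ t ≠ 0)
    (hℐ : ContinuousOn ℐ (Icc a b))
    (hx : ContinuousOn x (Icc a b)) (hy : ContinuousOn y (Icc a b))
    (hcan : ∀ t ∈ Icc a b, γ t = (x t : ℍ[ℝ]) + y t • (ℐ t : ℍ[ℝ]))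
    (hloop : γ a = γ b)
    (hcomp : (ℐ a : ℍ[ℝ]) = (ℐ b : ℍ[ℝ]) ∨ (ℐ a : ℍ[ℝ]) = -(ℐ b : ℍ[ℝ]))
    (hnonreal : (γ a).im ≠ 0) :
    (ℐ a : ℍ[ℝ]) = -(ℐ b : ℍ[ℝ]) ↔
      (x a : ℂ) + (y a : ℂ) * Complex.I =
        (starRingEnd ℂ) ((x b : ℂ) + (y b : ℂ) * Complex.I) :=
  twisted_iff_shadow_conjugate_endpoints_general a b hab γ ℐ x y hcan hloop hnonreal
end
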